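/- arXiv:1304.3671 — 2 statements merged into one kernel-verified Lean document; each statement's English description precedes it below -/
import Mathlib

section
/- Let P be a set of point trajectories satisfying the pseudo-algebraic and general position assumptions. Let (pq, r, I) and (pa, r, J) be single Delaunay crossings that are both clockwise (p,r)-crossings (i.e., r crosses segment pq from L⁻_pq to L⁺_pq during I and crosses segment pa from L⁻_pa to L⁺_pa during J), and suppose the (unique) time in I at which r lies on segment pq precedes the (unique) time in J at which r lies on segment pa. Then I begins before J begins, and I ends before J ends. The analogous statement holds for pairs of counterclockwise crossings of edges sharing their second endpoint. -/
/-!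
Let `σ₁ < σ₂` be the times at which `r` hits `pq` and `pa`, and suppose the crossing of `pa` ends
no later than that of `pq`, i.e. `t₃ ≤ t₁`. Throughout `(σ₂, t₃)` the point `r` lies on the same
side of both lines `pq` and `pa` and violates both edges; a circle through `p, q, a, r` would then
put `a` beyond `pq` and `q` beyond `pa`, which is impossible, so the incircle determinant of
`p, q, a, r` keeps the sign it has at `σ₂`, when `r` is inside the segment `pa`: `q` stays inside
the circumcircle of `p, a, r`. At `t₃` the edge `pa` is Delaunay again; comparing its empty disc
with that circumcircle in the pencil of circles through `p` and `a` puts `q` and `r` on the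
boundary of the empty disc. Just before `t₃` the circumcircle of `p, q, r` is then empty, so `pq`
is Delaunay inside `(t₀, t₁)`, a contradiction. Hence `t₁ < t₃`; reversing time exchanges the
roles of the two crossings and gives `t₀ < t₂`. Counterclockwise crossings are handled by the
same argument with the opposite orientation sign.
-/

noncomputable section

attribute [local instance] Classical.propDecidable

/-- The Euclidean plane. -/
abbrev Plane : Type := EuclideanSpace ℝ (Fin 2)

/-- A point trajectory: a moving point in the plane, parametrized by time. -/
abbrev Traj : Type := ℝ → Plane

/-- Signed orientation of `x` with respect to the line through `a` and `b`,
oriented from `a` to `b`; positive iff `x` lies in the open left halfplane `L⁻`. -/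
def orient (a b x : Plane) : ℝ :=
  (b 0 - a 0) * (x 1 - a 1) - (b 1 - a 1) * (x 0 - a 0)

/-- `x` lies in the open left halfplane `L⁻` of the line oriented from `a` to `b`. -/
def leftOf (a b x : Plane) : Prop := 0 < orient a b x

/-- `x` lies in the open right halfplane `L⁺` of the line oriented from `a` to `b`. -/
def rightOf (a b x : Plane) : Prop := orient a b x < 0

/-- `x` and `y` lie strictly on opposite sides of the line through `a` and `b`. -/
def OppositeSides (a b x y : Plane) : Prop := orient a b x * orient a b y < 0

/-- Four points of the plane are concyclic. -/
def Concyclic4 (a b c d : Plane) : Prop :=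
  ∃ (o : Plane) (ρ : ℝ), 0 < ρ ∧
    dist a o = ρ ∧ dist b o = ρ ∧ dist c o = ρ ∧ dist d o = ρ

/-- Five points of the plane are concyclic. -/
def Concyclic5 (a b c d e : Plane) : Prop :=
  ∃ (o : Plane) (ρ : ℝ), 0 < ρ ∧
    dist a o = ρ ∧ dist b o = ρ ∧ dist c o = ρ ∧ dist d o = ρ ∧ dist e o = ρ

/-- `x` lies in the open circumdisc of `a`, `b`, `c` (for non-collinear `a`, `b`, `c`
the circle through them is unique, so this is the usual notion). -/
def InCircumdisc (a b c x : Plane) : Prop :=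
  ∃ (o : Plane) (ρ : ℝ), dist a o = ρ ∧ dist b o = ρ ∧ dist c o = ρ ∧ dist x o < ρ

/-- `x` lies strictly outside the circumdisc of `a`, `b`, `c`. -/
def OutCircumdisc (a b c x : Plane) : Prop :=
  ∃ (o : Plane) (ρ : ℝ), dist a o = ρ ∧ dist b o = ρ ∧ dist c o = ρ ∧ ρ < dist x o

/-- The edge `pq` is Delaunay at time `t` with respect to the set `Q` of trajectories:
there is a closed disc whose boundary circle passes through `p t` and `q t` and whose
interior contains no point of `Q` at time `t`. -/
def DelaunayEdge (Q : Finset Traj) (p q : Traj) (t : ℝ) : Prop :=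
  ∃ (o : Plane) (ρ : ℝ), dist (p t) o = ρ ∧ dist (q t) o = ρ ∧
    ∀ x ∈ Q, ¬ dist (x t) o < ρ

/-- The four moving points `p, q, a, b` are concyclic at time `t`
(a co-circularity event). -/
def CocircAt (p q a b : Traj) (t : ℝ) : Prop :=
  Concyclic4 (p t) (q t) (a t) (b t)

/-- The three moving points `p, q, r` are collinear at time `t`
(a collinearity event). -/
def CollinAt (p q r : Traj) (t : ℝ) : Prop :=
  Collinear ℝ ({p t, q t, r t} : Set Plane)

/-- Pairwise distinctness of four trajectories. -/
def Distinct4 (p q a b : Traj) : Prop :=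
  p ≠ q ∧ p ≠ a ∧ p ≠ b ∧ q ≠ a ∧ q ≠ b ∧ a ≠ b

/-- Pairwise distinctness of three trajectories. -/
def Distinct3 (p q r : Traj) : Prop := p ≠ q ∧ p ≠ r ∧ q ≠ r

/-- The Delaunayhood of the edge `xy` is violated by the pair `u`, `v` at time `t`:
`u t` and `v t` lie strictly on opposite sides of the line through `x t` and `y t`,
and `v t` lies in the open circumdisc of `x t`, `y t`, `u t`. -/
def ViolatedBy (x y u v : Traj) (t : ℝ) : Prop :=
  OppositeSides (x t) (y t) (u t) (v t) ∧ InCircumdisc (x t) (y t) (u t) (v t)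

/-- General position assumptions on a finite set of moving points: the motions are
continuous, no two points ever coincide, no five points are ever concyclic, no four
are ever collinear, no two co-circularity or collinearity events occur simultaneously
and, at each such event, the involved point crosses the relevant circle or line
transversally. -/
structure GenPos (P : Finset Traj) : Prop where
  cont : ∀ p ∈ P, Continuous p
  never_coincide : ∀ p ∈ P, ∀ q ∈ P, p ≠ q → ∀ t : ℝ, p t ≠ q t
  no_five_cocirc : ∀ t : ℝ, ∀ p ∈ P, ∀ q ∈ P, ∀ a ∈ P, ∀ b ∈ P, ∀ e ∈ P,
    Distinct4 p q a b → p ≠ e → q ≠ e → a ≠ e → b ≠ e →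
    ¬ Concyclic5 (p t) (q t) (a t) (b t) (e t)
  no_four_collin : ∀ t : ℝ, ∀ p ∈ P, ∀ q ∈ P, ∀ a ∈ P, ∀ b ∈ P,
    Distinct4 p q a b → ¬ Collinear ℝ ({p t, q t, a t, b t} : Set Plane)
  unique_cocirc : ∀ t : ℝ, ∀ p ∈ P, ∀ q ∈ P, ∀ a ∈ P, ∀ b ∈ P,
    ∀ p' ∈ P, ∀ q' ∈ P, ∀ a' ∈ P, ∀ b' ∈ P,
    Distinct4 p q a b → Distinct4 p' q' a' b' →
    CocircAt p q a b t → CocircAt p' q' a' b' t →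
    ({p, q, a, b} : Set Traj) = ({p', q', a', b'} : Set Traj)
  unique_collin : ∀ t : ℝ, ∀ p ∈ P, ∀ q ∈ P, ∀ r ∈ P, ∀ p' ∈ P, ∀ q' ∈ P, ∀ r' ∈ P,
    Distinct3 p q r → Distinct3 p' q' r' →
    CollinAt p q r t → CollinAt p' q' r' t →
    ({p, q, r} : Set Traj) = ({p', q', r'} : Set Traj)
  cocirc_collin_separate : ∀ t : ℝ, ∀ p ∈ P, ∀ q ∈ P, ∀ a ∈ P, ∀ b ∈ P,
    ∀ p' ∈ P, ∀ q' ∈ P, ∀ r' ∈ P,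
    Distinct4 p q a b → Distinct3 p' q' r' →
    CocircAt p q a b t → ¬ CollinAt p' q' r' t
  circle_transversal : ∀ p ∈ P, ∀ q ∈ P, ∀ a ∈ P, ∀ b ∈ P, Distinct4 p q a b →
    ∀ t : ℝ, CocircAt p q a b t →
    ∃ δ > (0 : ℝ),
      ((∀ u ∈ Set.Ioo (t - δ) t, InCircumdisc (p u) (q u) (a u) (b u)) ∧
        (∀ u ∈ Set.Ioo t (t + δ), OutCircumdisc (p u) (q u) (a u) (b u))) ∨
      ((∀ u ∈ Set.Ioo (t - δ) t, OutCircumdisc (p u) (q u) (a u) (b u)) ∧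
        (∀ u ∈ Set.Ioo t (t + δ), InCircumdisc (p u) (q u) (a u) (b u)))
  line_transversal : ∀ p ∈ P, ∀ q ∈ P, ∀ r ∈ P, Distinct3 p q r →
    ∀ t : ℝ, CollinAt p q r t →
    ∃ δ > (0 : ℝ),
      ((∀ u ∈ Set.Ioo (t - δ) t, leftOf (p u) (q u) (r u)) ∧
        (∀ u ∈ Set.Ioo t (t + δ), rightOf (p u) (q u) (r u))) ∨
      ((∀ u ∈ Set.Ioo (t - δ) t, rightOf (p u) (q u) (r u)) ∧
        (∀ u ∈ Set.Ioo t (t + δ), leftOf (p u) (q u) (r u)))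

/-- Pseudo-algebraicity: any four points of `P` are concyclic at most `s` times. -/
def CocircBound (P : Finset Traj) (s : ℕ) : Prop :=
  ∀ p ∈ P, ∀ q ∈ P, ∀ a ∈ P, ∀ b ∈ P, Distinct4 p q a b →
    {t : ℝ | CocircAt p q a b t}.encard ≤ (s : ℕ∞)

/-- Pseudo-algebraicity: any three points of `P` are collinear at most `c` times. -/
def CollinBound (P : Finset Traj) (c : ℕ) : Prop :=
  ∀ p ∈ P, ∀ q ∈ P, ∀ r ∈ P, Distinct3 p q r →
    {t : ℝ | CollinAt p q r t}.encard ≤ (c : ℕ∞)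

/-- A Delaunay co-circularity event of `P` occurs at time `t`: some four (distinct)
points of `P` are concyclic at time `t`, and the open disc bounded by their common
circle contains no point of `P` at time `t`. -/
def DelaunayCocircAt (P : Finset Traj) (t : ℝ) : Prop :=
  ∃ p ∈ P, ∃ q ∈ P, ∃ a ∈ P, ∃ b ∈ P, Distinct4 p q a b ∧
    ∃ (o : Plane) (ρ : ℝ), 0 < ρ ∧
      dist (p t) o = ρ ∧ dist (q t) o = ρ ∧ dist (a t) o = ρ ∧ dist (b t) o = ρ ∧
      ∀ x ∈ P, ¬ dist (x t) o < ρ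

/-- A `k`-shallow co-circularity of `p, q, a, b` at time `t`: the four points are
concyclic and the open disc bounded by their common circle contains at most `k`
points of `P` at time `t`. -/
def ShallowCocircAt (P : Finset Traj) (k : ℕ) (p q a b : Traj) (t : ℝ) : Prop :=
  ∃ (o : Plane) (ρ : ℝ), 0 < ρ ∧
    dist (p t) o = ρ ∧ dist (q t) o = ρ ∧ dist (a t) o = ρ ∧ dist (b t) o = ρ ∧
    {x : Traj | x ∈ P ∧ dist (x t) o < ρ}.ncard ≤ k

/-- A `k`-shallow collinearity of `p, q, r` at time `t`: the three points are
collinear and one of the two open halfplanes bounded by the line through them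
contains at most `k` points of `P` at time `t`. -/
def ShallowCollinAt (P : Finset Traj) (k : ℕ) (p q r : Traj) (t : ℝ) : Prop :=
  CollinAt p q r t ∧ p t ≠ q t ∧
    ({x : Traj | x ∈ P ∧ leftOf (p t) (q t) (x t)}.ncard ≤ k ∨
      {x : Traj | x ∈ P ∧ rightOf (p t) (q t) (x t)}.ncard ≤ k)

/-- At time `t`, the point `r` lies on the segment `pq` and crosses it transversally
from the open halfplane `L⁻` (left of the oriented line `pq`) to `L⁺`. -/
def CrossesMinusPlus (p q r : Traj) (t : ℝ) : Prop :=
  r t ∈ segment ℝ (p t) (q t) ∧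
    ∃ δ > (0 : ℝ),
      (∀ u ∈ Set.Ioo (t - δ) t, leftOf (p u) (q u) (r u)) ∧
      (∀ u ∈ Set.Ioo t (t + δ), rightOf (p u) (q u) (r u))

/-- At time `t`, the point `r` lies on the segment `pq` and crosses it transversally
from `L⁺` to `L⁻`. -/
def CrossesPlusMinus (p q r : Traj) (t : ℝ) : Prop :=
  r t ∈ segment ℝ (p t) (q t) ∧
    ∃ δ > (0 : ℝ),
      (∀ u ∈ Set.Ioo (t - δ) t, rightOf (p u) (q u) (r u)) ∧
      (∀ u ∈ Set.Ioo t (t + δ), leftOf (p u) (q u) (r u))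

/-- A Delaunay crossing `(pq, r, [t₀, t₁])`: the edge `pq` is Delaunay with respect
to `P` at times `t₀` and `t₁` but at no time in `(t₀, t₁)`; `r` lies on the closed
segment `pq` at least once during `[t₀, t₁]`; and `pq` is Delaunay with respect to
`P ∖ {r}` throughout `[t₀, t₁]`. -/
structure DelaunayCrossing (P : Finset Traj) (p q r : Traj) (t₀ t₁ : ℝ) : Prop where
  lt : t₀ < t₁
  mem_p : p ∈ P
  mem_q : q ∈ P
  mem_r : r ∈ P
  distinct : Distinct3 p q r
  del_start : DelaunayEdge P p q t₀
  del_end : DelaunayEdge P p q t₁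
  not_del : ∀ t ∈ Set.Ioo t₀ t₁, ¬ DelaunayEdge P p q t
  hits : ∃ t ∈ Set.Icc t₀ t₁, r t ∈ segment ℝ (p t) (q t)
  del_erase : ∀ t ∈ Set.Icc t₀ t₁, DelaunayEdge (P.erase r) p q t

/-- A single Delaunay crossing, with the convention that `r` crosses the segment
`pq` from `L⁻` to `L⁺`: a Delaunay crossing in which `r` lies on the segment `pq`
at exactly one time of `[t₀, t₁]`, where it crosses from `L⁻` to `L⁺`.
(It is a clockwise `(p, r)`-crossing and a counterclockwise `(q, r)`-crossing.) -/
structure SingleCrossing (P : Finset Traj) (p q r : Traj) (t₀ t₁ : ℝ) : Prop where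
  crossing : DelaunayCrossing P p q r t₀ t₁
  unique_hit : ∀ t ∈ Set.Icc t₀ t₁, ∀ t' ∈ Set.Icc t₀ t₁,
    r t ∈ segment ℝ (p t) (q t) → r t' ∈ segment ℝ (p t') (q t') → t = t'
  dir : ∀ t ∈ Set.Icc t₀ t₁, r t ∈ segment ℝ (p t) (q t) → CrossesMinusPlus p q r t

/-- A double Delaunay crossing: a Delaunay crossing in which `r` lies on the
segment `pq` at exactly two times of `[t₀, t₁]`. -/
structure DoubleCrossing (P : Finset Traj) (p q r : Traj) (t₀ t₁ : ℝ) : Prop where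
  crossing : DelaunayCrossing P p q r t₀ t₁
  two_hits : ∃ u v : ℝ, u ∈ Set.Icc t₀ t₁ ∧ v ∈ Set.Icc t₀ t₁ ∧ u ≠ v ∧
    r u ∈ segment ℝ (p u) (q u) ∧ r v ∈ segment ℝ (p v) (q v) ∧
    ∀ t ∈ Set.Icc t₀ t₁, r t ∈ segment ℝ (p t) (q t) → t = u ∨ t = v

/-- The point `s` enters the cap `B[p,q,r] ∩ L⁺_pq` at time `t`: just before `t` it
lies strictly outside the circumdisc `B[p,q,r]`, and just after `t` it lies inside
`B[p,q,r]` and in the open right halfplane `L⁺` of the oriented line `pq`. -/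
def EntersCapPlus (p q r s : Traj) (t : ℝ) : Prop :=
  ∃ δ > (0 : ℝ),
    (∀ u ∈ Set.Ioo (t - δ) t, OutCircumdisc (p u) (q u) (r u) (s u)) ∧
    (∀ u ∈ Set.Ioo t (t + δ),
      InCircumdisc (p u) (q u) (r u) (s u) ∧ rightOf (p u) (q u) (s u))

/-- The point `s` leaves the cap `B[p,q,r] ∩ L⁻_pq` at time `t`: just before `t` it
lies inside the circumdisc `B[p,q,r]` and in the open left halfplane `L⁻` of the
oriented line `pq`, and just after `t` it lies strictly outside `B[p,q,r]`. -/
def LeavesCapMinus (p q r s : Traj) (t : ℝ) : Prop :=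
  ∃ δ > (0 : ℝ),
    (∀ u ∈ Set.Ioo (t - δ) t,
      InCircumdisc (p u) (q u) (r u) (s u) ∧ leftOf (p u) (q u) (s u)) ∧
    (∀ u ∈ Set.Ioo t (t + δ), OutCircumdisc (p u) (q u) (r u) (s u))

open Set Filter Topology

lemma plane_ext {x y : Plane} (h0 : x 0 = y 0) (h1 : x 1 = y 1) : x = y := by
  ext i; fin_cases i <;> assumption

def sqDist (x y : Plane) : ℝ := (x 0 - y 0) ^ 2 + (x 1 - y 1) ^ 2

lemma sqDist_eq_dist_sq (x y : Plane) : sqDist x y = dist x y ^ 2 := by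
  rw [EuclideanSpace.dist_eq, Real.sq_sqrt (by positivity)]
  simp [Fin.sum_univ_two, sqDist, Real.dist_eq, sq_abs]

lemma sqDist_pos {x y : Plane} (h : x ≠ y) : 0 < sqDist x y := by
  rw [sqDist_eq_dist_sq]; exact pow_pos (dist_pos.2 h) 2

lemma orient_swap (a b x : Plane) : orient a x b = -orient a b x := by
  simp only [orient]; ring

lemma orient_flip (a b x : Plane) : orient b a x = -orient a b x := by
  simp only [orient]; ring

lemma lineMap_coord (p q : Plane) (s : ℝ) (i : Fin 2) :
    AffineMap.lineMap p q s i = p i + s * (q i - p i) := by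
  simp [AffineMap.lineMap_apply_module]; ring

lemma orient_lineMap (p q b : Plane) (s : ℝ) :
    orient p q (AffineMap.lineMap p b s) = s * orient p q b := by
  simp only [orient, lineMap_coord]; ring

lemma exists_eq_lineMap_of_orient_eq_zero {p q x : Plane} (hpq : p ≠ q) (h : orient p q x = 0) :
    ∃ s : ℝ, x = AffineMap.lineMap p q s := by
  have hne : q 0 - p 0 ≠ 0 ∨ q 1 - p 1 ≠ 0 := by
    by_contra! hc
    exact hpq (plane_ext (by linarith [hc.1]) (by linarith [hc.2]))
  simp only [orient] at h
  rcases hne with h0 | h1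
  · refine ⟨(x 0 - p 0) / (q 0 - p 0), plane_ext ?_ ?_⟩ <;> simp only [lineMap_coord] <;>
      field_simp
    · ring
    · linear_combination h
  · refine ⟨(x 1 - p 1) / (q 1 - p 1), plane_ext ?_ ?_⟩ <;> simp only [lineMap_coord] <;>
      field_simp
    · linear_combination -h
    · ring

lemma exists_mem_Ioo_eq_lineMap {p q x : Plane} (hx : x ∈ segment ℝ p q) (hxp : x ≠ p)
    (hxq : x ≠ q) : ∃ s ∈ Ioo (0 : ℝ) 1, x = AffineMap.lineMap p q s := by
  rw [segment_eq_image_lineMap] at hx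
  obtain ⟨s, hs, rfl⟩ := hx
  refine ⟨s, ⟨hs.1.lt_of_ne ?_, hs.2.lt_of_ne ?_⟩, rfl⟩ <;> rintro rfl
  · exact hxp (AffineMap.lineMap_apply_zero _ _)
  · exact hxq (AffineMap.lineMap_apply_one _ _)

lemma mul_sub_one_pos_of_lineMap_notMem_segment {p q : Plane} {s : ℝ}
    (h : AffineMap.lineMap p q s ∉ segment ℝ p q) : 0 < s * (s - 1) := by
  by_contra! hs
  exact h (segment_eq_image_lineMap ℝ p q ▸ ⟨s, ⟨by nlinarith, by nlinarith⟩, rfl⟩)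

lemma sqDist_lineMap {p q o : Plane} {R : ℝ} (hp : sqDist p o = R) (hq : sqDist q o = R)
    (s : ℝ) : sqDist (AffineMap.lineMap p q s) o = R + s * (s - 1) * sqDist q p := by
  simp only [sqDist, lineMap_coord] at *
  linear_combination (1 - s) * hp + s * hq

lemma eq_or_eq_of_orient_eq_zero {p q x o : Plane} {R : ℝ} (hpq : p ≠ q)
    (hp : sqDist p o = R) (hq : sqDist q o = R) (hx : sqDist x o = R) (h : orient p q x = 0) :
    x = p ∨ x = q := by
  obtain ⟨s, rfl⟩ := exists_eq_lineMap_of_orient_eq_zero hpq h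
  have hs : s * (s - 1) * sqDist q p = 0 := by linarith [sqDist_lineMap hp hq s]
  rcases mul_eq_zero.1 hs with hs | hs
  · rcases mul_eq_zero.1 hs with rfl | hs
    · exact Or.inl (AffineMap.lineMap_apply_zero _ _)
    · obtain rfl : s = 1 := by linarith
      exact Or.inr (AffineMap.lineMap_apply_one _ _)
  · exact absurd hs (sqDist_pos hpq.symm).ne'

lemma collinear_of_orient_eq_zero {p a x y : Plane} (hpa : p ≠ a) (hx : orient p a x = 0)
    (hy : orient p a y = 0) : Collinear ℝ ({p, x, a, y} : Set Plane) := by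
  obtain ⟨s, rfl⟩ := exists_eq_lineMap_of_orient_eq_zero hpa hx
  obtain ⟨s', rfl⟩ := exists_eq_lineMap_of_orient_eq_zero hpa hy
  refine (collinear_insert_insert_of_mem_affineSpan_pair
    (AffineMap.lineMap_mem_affineSpan_pair s p a)
    (AffineMap.lineMap_mem_affineSpan_pair s' p a)).subset ?_
  simp [Set.insert_subset_iff]

/-- The incircle determinant, expanded about `p`; `orient_mul_power_circumcenter` gives its
geometric meaning. -/
def incircle (p q a x : Plane) : ℝ :=
  (q 0 - p 0) * ((a 1 - p 1) * sqDist x p - (x 1 - p 1) * sqDist a p)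
  - (q 1 - p 1) * ((a 0 - p 0) * sqDist x p - (x 0 - p 0) * sqDist a p)
  + sqDist q p * ((a 0 - p 0) * (x 1 - p 1) - (a 1 - p 1) * (x 0 - p 0))

lemma incircle_swap (p q a x : Plane) : incircle p q x a = -incircle p q a x := by
  simp only [incircle, sqDist]; ring

lemma incircle_rotate (p q a x : Plane) : incircle p a x q = incircle p q a x := by
  simp only [incircle, sqDist]; ring

lemma incircle_lineMap (p q a : Plane) (s : ℝ) :
    incircle p q a (AffineMap.lineMap p a s) = s * (s - 1) * sqDist a p * orient p q a := by
  simp only [incircle, sqDist, orient, lineMap_coord]; ring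

def circumcenter (p q r : Plane) : Plane :=
  !₂[p 0 + (sqDist q p * (r 1 - p 1) - sqDist r p * (q 1 - p 1)) / (2 * orient p q r),
    p 1 + (sqDist r p * (q 0 - p 0) - sqDist q p * (r 0 - p 0)) / (2 * orient p q r)]

def circumradiusSq (p q r : Plane) : ℝ := sqDist p (circumcenter p q r)

lemma circumcenter_coord_zero (p q r : Plane) : circumcenter p q r 0
    = p 0 + (sqDist q p * (r 1 - p 1) - sqDist r p * (q 1 - p 1)) / (2 * orient p q r) := rfl

lemma circumcenter_coord_one (p q r : Plane) : circumcenter p q r 1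
    = p 1 + (sqDist r p * (q 0 - p 0) - sqDist q p * (r 0 - p 0)) / (2 * orient p q r) := rfl

lemma sqDist_circumcenter_middle (p q r : Plane) (h : orient p q r ≠ 0) :
    sqDist q (circumcenter p q r) = circumradiusSq p q r := by
  simp only [circumradiusSq, sqDist, circumcenter_coord_zero, circumcenter_coord_one, orient] at *
  field_simp
  ring

lemma sqDist_circumcenter_right (p q r : Plane) (h : orient p q r ≠ 0) :
    sqDist r (circumcenter p q r) = circumradiusSq p q r := by
  simp only [circumradiusSq, sqDist, circumcenter_coord_zero, circumcenter_coord_one, orient] at *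
  field_simp
  ring

lemma orient_mul_power_circumcenter (p q r x : Plane) (h : orient p q r ≠ 0) :
    orient p q r * (sqDist x (circumcenter p q r) - circumradiusSq p q r) = incircle p q r x := by
  simp only [circumradiusSq, sqDist, circumcenter_coord_zero, circumcenter_coord_one, orient,
    incircle] at *
  field_simp
  ring

lemma eq_circumcenter {p q r o : Plane} {R : ℝ} (h : orient p q r ≠ 0)
    (hp : sqDist p o = R) (hq : sqDist q o = R) (hr : sqDist r o = R) :
    o = circumcenter p q r := by
  have e₁ : sqDist p o - sqDist q o = 0 := by rw [hp, hq, sub_self]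
  have e₂ : sqDist p o - sqDist r o = 0 := by rw [hp, hr, sub_self]
  have h2 : 2 * orient p q r ≠ 0 := mul_ne_zero two_ne_zero h
  simp only [sqDist] at e₁ e₂
  refine plane_ext ?_ ?_
  · rw [circumcenter_coord_zero, ← sub_eq_iff_eq_add', eq_div_iff h2]
    simp only [sqDist, orient]
    linear_combination (r 1 - p 1) * e₁ - (q 1 - p 1) * e₂
  · rw [circumcenter_coord_one, ← sub_eq_iff_eq_add', eq_div_iff h2]
    simp only [sqDist, orient]
    linear_combination (q 0 - p 0) * e₂ - (r 0 - p 0) * e₁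

lemma lt_sqDist_circumcenter_iff {p q r x : Plane} (h : orient p q r ≠ 0) :
    circumradiusSq p q r < sqDist x (circumcenter p q r) ↔ 0 < orient p q r * incircle p q r x := by
  rw [← orient_mul_power_circumcenter p q r x h, ← mul_assoc, ← sq,
    mul_pos_iff_of_pos_left (by positivity), sub_pos]

/-- The difference of the powers with respect to two circles through `p` and `q` is an affine
function vanishing on the line `pq`, hence a multiple of `orient p q`. -/
lemma power_sub_power_mul_orient {p q o₁ o₂ : Plane} {R₁ R₂ : ℝ}
    (hp₁ : sqDist p o₁ = R₁) (hq₁ : sqDist q o₁ = R₁) (hp₂ : sqDist p o₂ = R₂)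
    (hq₂ : sqDist q o₂ = R₂) (x y : Plane) :
    ((sqDist x o₁ - R₁) - (sqDist x o₂ - R₂)) * orient p q y
      = ((sqDist y o₁ - R₁) - (sqDist y o₂ - R₂)) * orient p q x := by
  simp only [sqDist, orient] at *
  linear_combination (((q 0 - p 0) * (y 1 - p 1) - (q 1 - p 1) * (y 0 - p 0))
      - ((q 0 - p 0) * (x 1 - p 1) - (q 1 - p 1) * (x 0 - p 0))
      - ((x 0 - p 0) * (y 1 - p 1) - (x 1 - p 1) * (y 0 - p 0))) * (hp₁ - hp₂)
    + ((x 0 - p 0) * (y 1 - p 1) - (x 1 - p 1) * (y 0 - p 0)) * (hq₁ - hq₂)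

lemma power_sub_power_circumcenter_mul_orient {p q x o : Plane} {R : ℝ} (hg : orient p q x ≠ 0)
    (hp : sqDist p o = R) (hq : sqDist q o = R) (y : Plane) :
    ((sqDist y (circumcenter p q x) - circumradiusSq p q x) - (sqDist y o - R)) * orient p q x
      = -(sqDist x o - R) * orient p q y := by
  have h := power_sub_power_mul_orient (R₁ := circumradiusSq p q x) rfl
    (sqDist_circumcenter_middle p q x hg) hp hq y x
  rwa [sqDist_circumcenter_right p q x hg, sub_self, zero_sub] at h

/-- On the side of the line `pq` away from `x`, the circumdisc of `p, q, x` lies inside every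
disc through `p` and `q` whose interior misses `x`. -/
lemma power_le_power_circumcenter {p q x y o : Plane} {R : ℝ} (hp : sqDist p o = R)
    (hq : sqDist q o = R) (hx : R ≤ sqDist x o) (hg : orient p q x ≠ 0)
    (hxy : orient p q x * orient p q y ≤ 0) :
    sqDist y o - R ≤ sqDist y (circumcenter p q x) - circumradiusSq p q x := by
  have h := congrArg (· * orient p q x) (power_sub_power_circumcenter_mul_orient hg hp hq y)
  have hg2 : 0 < orient p q x ^ 2 := by positivity
  have : 0 ≤ (sqDist y (circumcenter p q x) - circumradiusSq p q x - (sqDist y o - R))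
      * orient p q x ^ 2 := by
    nlinarith [mul_nonneg (sub_nonneg.2 hx) (neg_nonneg.2 hxy)]
  nlinarith [nonneg_of_mul_nonneg_left this hg2]

lemma orient_mul_orient_neg_of_sqDist_circumcenter_le {p q x y o : Plane} {R : ℝ} (hpq : p ≠ q)
    (hp : sqDist p o = R) (hq : sqDist q o = R) (hx : sqDist x o < R) (hy : R ≤ sqDist y o)
    (hg : orient p q x ≠ 0)
    (hyC : sqDist y (circumcenter p q x) ≤ circumradiusSq p q x) (hyp : y ≠ p) (hyq : y ≠ q) :
    orient p q x * orient p q y < 0 := by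
  have h := power_sub_power_circumcenter_mul_orient hg hp hq y
  have hK : orient p q y ≠ 0 := by
    intro hK
    rw [hK, mul_zero, mul_eq_zero, sub_eq_zero] at h
    have hyo : sqDist y o = R := by rcases h with h | h <;> [linarith; exact absurd h hg]
    rcases eq_or_eq_of_orient_eq_zero hpq hp hq hyo hK with h | h <;> contradiction
  have h' := congrArg (· * orient p q x) h
  have : orient p q x * orient p q y ≤ 0 := by
    by_contra! hpos
    nlinarith [mul_pos (sub_pos.2 hx) hpos, sq_nonneg (orient p q x)]
  exact this.lt_of_ne (mul_ne_zero hg hK)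

lemma sqDist_eq_of_le_circumradiusSq {p q r b o : Plane} {R : ℝ} (hpq : p ≠ q)
    (hp : sqDist p o = R) (hq : sqDist q o = R) (hr : R ≤ sqDist r o) (hb : R ≤ sqDist b o)
    (hg : orient p q r ≠ 0) (hside : orient p q r * orient p q b ≤ 0)
    (hbC : sqDist b (circumcenter p q r) ≤ circumradiusSq p q r) (hbp : b ≠ p) (hbq : b ≠ q) :
    sqDist b o = R ∧ sqDist r o = R := by
  have hbo : sqDist b o = R :=
    le_antisymm (by linarith [power_le_power_circumcenter hp hq hr hg hside]) hb
  have hbC' : sqDist b (circumcenter p q r) = circumradiusSq p q r :=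
    le_antisymm hbC (by linarith [power_le_power_circumcenter hp hq hr hg hside])
  have hK : orient p q b ≠ 0 := fun h =>
    (eq_or_eq_of_orient_eq_zero hpq rfl (sqDist_circumcenter_middle _ _ _ hg) hbC' h).elim hbp hbq
  have hcc := eq_circumcenter hK rfl (sqDist_circumcenter_middle _ _ _ hg) hbC'
  have ho := eq_circumcenter hK hp hq hbo
  refine ⟨hbo, ?_⟩
  rw [ho, ← hcc, sqDist_circumcenter_right _ _ _ hg, circumradiusSq, hcc, ← ho, hp]

lemma incircle_ne_zero_of_violating_discs {p q a r o₁ o₂ : Plane} {R₁ R₂ : ℝ} (hpq : p ≠ q)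
    (hpa : p ≠ a) (hqa : q ≠ a) (hp₁ : sqDist p o₁ = R₁) (hq₁ : sqDist q o₁ = R₁)
    (ha₁ : R₁ ≤ sqDist a o₁) (hr₁ : sqDist r o₁ < R₁) (hp₂ : sqDist p o₂ = R₂)
    (ha₂ : sqDist a o₂ = R₂) (hq₂ : R₂ ≤ sqDist q o₂) (hr₂ : sqDist r o₂ < R₂)
    (hside : 0 < orient p q r * orient p a r) : incircle p q a r ≠ 0 := by
  intro hD
  have hG : orient p q r ≠ 0 := left_ne_zero_of_mul hside.ne'
  have hH : orient p a r ≠ 0 := right_ne_zero_of_mul hside.ne'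
  have ha : sqDist a (circumcenter p q r) = circumradiusSq p q r := by
    have h := orient_mul_power_circumcenter p q r a hG
    rw [incircle_swap, hD, neg_zero, mul_eq_zero, sub_eq_zero] at h
    exact h.resolve_left hG
  have hq : sqDist q (circumcenter p a r) = circumradiusSq p a r := by
    have h := orient_mul_power_circumcenter p a r q hH
    rw [incircle_rotate, hD, mul_eq_zero, sub_eq_zero] at h
    exact h.resolve_left hH
  have h₁ := orient_mul_orient_neg_of_sqDist_circumcenter_le hpq hp₁ hq₁ hr₁ ha₁ hG ha.le
    hpa.symm hqa.symm
  have h₂ := orient_mul_orient_neg_of_sqDist_circumcenter_le hpa hp₂ ha₂ hr₂ hq₂ hH hq.le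
    hpq.symm hqa
  rw [orient_swap p q a] at h₂
  nlinarith [sq_nonneg (orient p q a)]

lemma DelaunayEdge.exists_sqDist {Q : Finset Traj} {a b : Traj} {t : ℝ}
    (h : DelaunayEdge Q a b t) (hab : a t ≠ b t) :
    ∃ (o : Plane) (R : ℝ), 0 < R ∧ sqDist (a t) o = R ∧ sqDist (b t) o = R ∧
      ∀ x ∈ Q, R ≤ sqDist (x t) o := by
  obtain ⟨o, ρ, ha, hb, hQ⟩ := h
  have hρ : 0 < ρ := by
    refine (ha ▸ dist_nonneg : 0 ≤ ρ).lt_of_ne fun h => hab ?_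
    rw [← h] at ha hb
    rw [dist_eq_zero.1 ha, dist_eq_zero.1 hb]
  refine ⟨o, ρ ^ 2, by positivity, by rw [sqDist_eq_dist_sq, ha], by rw [sqDist_eq_dist_sq, hb],
    fun x hx => ?_⟩
  rw [sqDist_eq_dist_sq]
  exact pow_le_pow_left₀ hρ.le (not_lt.1 (hQ x hx)) 2

lemma delaunayEdge_of_sqDist {Q : Finset Traj} {a b : Traj} {t : ℝ} (o : Plane) (R : ℝ)
    (ha : sqDist (a t) o = R) (hb : sqDist (b t) o = R) (hQ : ∀ x ∈ Q, R ≤ sqDist (x t) o) :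
    DelaunayEdge Q a b t := by
  have hdist : ∀ x : Plane, dist x o = √(sqDist x o) := fun x => by
    rw [sqDist_eq_dist_sq, Real.sqrt_sq dist_nonneg]
  refine ⟨o, √R, by rw [hdist, ha], by rw [hdist, hb], fun x hx => ?_⟩
  rw [hdist, not_lt]
  exact Real.sqrt_le_sqrt (hQ x hx)

lemma DelaunayEdge.symm {Q : Finset Traj} {a b : Traj} {t : ℝ} (h : DelaunayEdge Q a b t) :
    DelaunayEdge Q b a t :=
  let ⟨o, ρ, ha, hb, hQ⟩ := h
  ⟨o, ρ, hb, ha, hQ⟩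

lemma concyclic5_of_sqDist {a b c d e o : Plane} {R : ℝ} (hR : 0 < R) (ha : sqDist a o = R)
    (hb : sqDist b o = R) (hc : sqDist c o = R) (hd : sqDist d o = R) (he : sqDist e o = R) :
    Concyclic5 a b c d e := by
  have hdist : ∀ x : Plane, sqDist x o = R → dist x o = √R := fun x hx => by
    rw [← hx, sqDist_eq_dist_sq, Real.sqrt_sq dist_nonneg]
  exact ⟨o, √R, Real.sqrt_pos.2 hR, hdist a ha, hdist b hb, hdist c hc, hdist d hd, hdist e he⟩

lemma continuous_sqDist {f g : ℝ → Plane} (hf : Continuous f) (hg : Continuous g) :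
    Continuous fun t => sqDist (f t) (g t) := by
  unfold sqDist; fun_prop

lemma continuous_orient {f g h : ℝ → Plane} (hf : Continuous f) (hg : Continuous g)
    (hh : Continuous h) : Continuous fun t => orient (f t) (g t) (h t) := by
  unfold orient; fun_prop

lemma continuous_incircle {f g h k : ℝ → Plane} (hf : Continuous f) (hg : Continuous g)
    (hh : Continuous h) (hk : Continuous k) :
    Continuous fun t => incircle (f t) (g t) (h t) (k t) := by
  have := continuous_sqDist hk hf; have := continuous_sqDist hh hf
  have := continuous_sqDist hg hf
  unfold incircle; fun_prop

lemma IsPreconnected.pos_of_ne_zero {s : Set ℝ} {f : ℝ → ℝ} (hs : IsPreconnected s)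
    (hf : ContinuousOn f s) (hne : ∀ x ∈ s, f x ≠ 0) {w : ℝ} (hw : w ∈ s) (hfw : 0 < f w) :
    ∀ x ∈ s, 0 < f x := by
  intro x hx
  by_contra! hfx
  obtain ⟨z, hz, hfz⟩ := hs.intermediate_value hx hw hf ⟨hfx, hfw.le⟩
  exact hne z hz hfz

lemma le_of_forall_Ioo_le {f g : ℝ → ℝ} (hf : Continuous f) (hg : Continuous g) {a b : ℝ}
    (hab : a < b) (h : ∀ t ∈ Ioo a b, f t ≤ g t) : f b ≤ g b := by
  have hb : b ∈ closure (Ioo a b) := by rw [closure_Ioo hab.ne]; exact right_mem_Icc.2 hab.le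
  exact (isClosed_le hf hg).closure_subset_iff.2 h hb

structure Nondegenerate (P : Finset Traj) : Prop where
  cont : ∀ p ∈ P, Continuous p
  never_coincide : ∀ p ∈ P, ∀ q ∈ P, p ≠ q → ∀ t : ℝ, p t ≠ q t
  no_five_cocirc : ∀ t : ℝ, ∀ p ∈ P, ∀ q ∈ P, ∀ a ∈ P, ∀ b ∈ P, ∀ e ∈ P,
    Distinct4 p q a b → p ≠ e → q ≠ e → a ≠ e → b ≠ e →
    ¬ Concyclic5 (p t) (q t) (a t) (b t) (e t)
  no_four_collin : ∀ t : ℝ, ∀ p ∈ P, ∀ q ∈ P, ∀ a ∈ P, ∀ b ∈ P,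
    Distinct4 p q a b → ¬ Collinear ℝ ({p t, q t, a t, b t} : Set Plane)

lemma GenPos.nondegenerate {P : Finset Traj} (h : GenPos P) : Nondegenerate P :=
  ⟨h.cont, h.never_coincide, h.no_five_cocirc, h.no_four_collin⟩

def reverse (x : Traj) : Traj := fun t => x (-t)

@[simp] lemma reverse_apply (x : Traj) (t : ℝ) : reverse x t = x (-t) := rfl

lemma reverse_injective : Function.Injective reverse :=
  Function.LeftInverse.injective (g := reverse) fun x => funext fun t => by simp

@[simp] lemma reverse_inj {x y : Traj} : reverse x = reverse y ↔ x = y :=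
  reverse_injective.eq_iff

lemma Nondegenerate.image_reverse {P : Finset Traj} (h : Nondegenerate P) :
    Nondegenerate (P.image reverse) := by
  refine ⟨?_, ?_, ?_, ?_⟩ <;>
    simp only [Finset.forall_mem_image, reverse_apply, Distinct4, ne_eq, reverse_inj]
  · exact fun x hx => (h.cont x hx).comp continuous_neg
  · exact fun p hp q hq hpq t => h.never_coincide p hp q hq hpq (-t)
  · exact fun t p hp q hq a ha b hb e he hd => h.no_five_cocirc (-t) p hp q hq a ha b hb e he hd
  · exact fun t p hp q hq a ha b hb hd => h.no_four_collin (-t) p hp q hq a ha b hb hd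

lemma delaunayEdge_image_reverse {Q : Finset Traj} {a b : Traj} {t : ℝ} :
    DelaunayEdge (Q.image reverse) (reverse a) (reverse b) t ↔ DelaunayEdge Q a b (-t) := by
  simp only [DelaunayEdge, Finset.forall_mem_image, reverse_apply]

namespace DelaunayCrossing

variable {P : Finset Traj} {p q r : Traj} {t₀ t₁ : ℝ}

lemma symm (h : DelaunayCrossing P p q r t₀ t₁) : DelaunayCrossing P q p r t₀ t₁ where
  lt := h.lt
  mem_p := h.mem_q
  mem_q := h.mem_p
  mem_r := h.mem_r
  distinct := ⟨h.distinct.1.symm, h.distinct.2.2, h.distinct.2.1⟩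
  del_start := h.del_start.symm
  del_end := h.del_end.symm
  not_del t ht hd := h.not_del t ht hd.symm
  hits := let ⟨t, ht, hr⟩ := h.hits; ⟨t, ht, segment_symm ℝ (p t) (q t) ▸ hr⟩
  del_erase t ht := (h.del_erase t ht).symm

lemma reverse (h : DelaunayCrossing P p q r t₀ t₁) :
    DelaunayCrossing (P.image reverse) (reverse p) (reverse q) (reverse r) (-t₁) (-t₀) where
  lt := neg_lt_neg h.lt
  mem_p := Finset.mem_image_of_mem _ h.mem_p
  mem_q := Finset.mem_image_of_mem _ h.mem_q
  mem_r := Finset.mem_image_of_mem _ h.mem_r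
  distinct := by simpa only [Distinct3, ne_eq, reverse_inj] using h.distinct
  del_start := delaunayEdge_image_reverse.2 (by simpa using h.del_end)
  del_end := delaunayEdge_image_reverse.2 (by simpa using h.del_start)
  not_del t ht := by
    rw [delaunayEdge_image_reverse]
    exact h.not_del (-t) ⟨by linarith [ht.2], by linarith [ht.1]⟩
  hits := by
    obtain ⟨t, ht, hr⟩ := h.hits
    exact ⟨-t, ⟨neg_le_neg ht.2, neg_le_neg ht.1⟩, by simpa using hr⟩
  del_erase t ht := by
    rw [← Finset.image_erase reverse_injective, delaunayEdge_image_reverse]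
    exact h.del_erase (-t) ⟨by linarith [ht.2], by linarith [ht.1]⟩

end DelaunayCrossing

/-- By `lt_sqDist_circumcenter_iff`, the conclusion says that every other point stays strictly
outside the circle through `p t, q t, r t`; it is phrased with `orient * incircle`, which is
continuous in `t`. -/
lemma eventually_orient_mul_incircle_pos {P : Finset Traj} (hP : Nondegenerate P)
    {p q r a : Traj} (hp : p ∈ P) (hq : q ∈ P) (hr : r ∈ P) (ha : a ∈ P)
    (hd : Distinct4 p q r a) {τ : ℝ} {o : Plane} {R : ℝ} (hR : 0 < R)
    (hpo : sqDist (p τ) o = R) (hqo : sqDist (q τ) o = R) (hro : sqDist (r τ) o = R)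
    (hao : sqDist (a τ) o = R) (hout : ∀ x ∈ P, R ≤ sqDist (x τ) o)
    (hg : orient (p τ) (q τ) (r τ) ≠ 0) :
    ∀ᶠ t in 𝓝 τ, ∀ x ∈ P, x ≠ p → x ≠ q → x ≠ r → x ≠ a →
      0 < orient (p t) (q t) (r t) * incircle (p t) (q t) (r t) (x t) := by
  rw [Filter.eventually_all_finset]
  intro x hx
  by_cases hx' : x ≠ p ∧ x ≠ q ∧ x ≠ r ∧ x ≠ a
  · obtain ⟨hxp, hxq, hxr, hxa⟩ := hx'
    have hcont : Continuous fun t => orient (p t) (q t) (r t) * incircle (p t) (q t) (r t) (x t) :=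
      have := hP.cont
      (continuous_orient (this p hp) (this q hq) (this r hr)).mul
        (continuous_incircle (this p hp) (this q hq) (this r hr) (this x hx))
    have hxo : R < sqDist (x τ) o := (hout x hx).lt_of_ne fun h =>
      hP.no_five_cocirc τ p hp q hq r hr a ha x hx hd hxp.symm hxq.symm hxr.symm hxa.symm
        (concyclic5_of_sqDist hR hpo hqo hro hao h.symm)
    have hoc := eq_circumcenter hg hpo hqo hro
    have hτ := (lt_sqDist_circumcenter_iff (x := x τ) hg).1 (by rwa [circumradiusSq, ← hoc, hpo])
    filter_upwards [hcont.continuousAt.eventually (lt_mem_nhds hτ)] with t ht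
    exact fun _ _ _ _ => ht
  · refine Filter.Eventually.of_forall fun t hxp hxq hxr hxa => absurd ⟨hxp, hxq, hxr, hxa⟩ hx'

/-- A Delaunay crossing `(pq, r, [t₀, t₁])` in which `r` lies on the segment `pq` only at time
`σ`, crossing from `L⁻` to `L⁺` if `ε = 1` and from `L⁺` to `L⁻` if `ε = -1`. Allowing either
sign makes the notion invariant under reversal of time. -/
structure SignedCrossing (P : Finset Traj) (ε : ℝ) (p q r : Traj) (t₀ t₁ σ : ℝ) : Prop where
  crossing : DelaunayCrossing P p q r t₀ t₁
  hit_mem : σ ∈ Icc t₀ t₁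
  hit : r σ ∈ segment ℝ (p σ) (q σ)
  unique_hit : ∀ t ∈ Icc t₀ t₁, r t ∈ segment ℝ (p t) (q t) → t = σ
  sign : ∃ δ > 0, (∀ u ∈ Ioo (σ - δ) σ, 0 < ε * orient (p u) (q u) (r u)) ∧
    ∀ u ∈ Ioo σ (σ + δ), ε * orient (p u) (q u) (r u) < 0

namespace SignedCrossing

variable {P : Finset Traj} {ε : ℝ} {p q r : Traj} {t₀ t₁ σ : ℝ}

lemma sign_ne_zero (c : SignedCrossing P ε p q r t₀ t₁ σ) : ε ≠ 0 := by
  rintro rfl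
  obtain ⟨δ, hδ, h, -⟩ := c.sign
  simpa using h (σ - δ / 2) ⟨by linarith, by linarith⟩

lemma reverse (c : SignedCrossing P ε p q r t₀ t₁ σ) :
    SignedCrossing (P.image reverse) (-ε) (reverse p) (reverse q) (reverse r) (-t₁) (-t₀) (-σ)
    where
  crossing := c.crossing.reverse
  hit_mem := ⟨neg_le_neg c.hit_mem.2, neg_le_neg c.hit_mem.1⟩
  hit := by simpa using c.hit
  unique_hit t ht hr := by
    rw [← c.unique_hit (-t) ⟨by linarith [ht.2], by linarith [ht.1]⟩ (by simpa using hr), neg_neg]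
  sign := by
    obtain ⟨δ, hδ, hbefore, hafter⟩ := c.sign
    refine ⟨δ, hδ, fun u hu => ?_, fun u hu => ?_⟩ <;> simp only [reverse_apply, neg_mul]
    · exact neg_pos.2 (hafter (-u) ⟨by linarith [hu.2], by linarith [hu.1]⟩)
    · exact neg_neg_iff_pos.2 (hbefore (-u) ⟨by linarith [hu.2], by linarith [hu.1]⟩)

variable (hP : Nondegenerate P) (c : SignedCrossing P ε p q r t₀ t₁ σ)
include hP c

lemma apart (t : ℝ) : p t ≠ q t ∧ p t ≠ r t ∧ q t ≠ r t :=
  have h := hP.never_coincide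
  have hp := c.crossing.mem_p; have hq := c.crossing.mem_q; have hr := c.crossing.mem_r
  let ⟨hpq, hpr, hqr⟩ := c.crossing.distinct
  ⟨h p hp q hq hpq t, h p hp r hr hpr t, h q hq r hr hqr t⟩

lemma hit_mem_Ioo : σ ∈ Ioo t₀ t₁ := by
  obtain ⟨hpq, hpr, hqr⟩ := c.apart hP σ
  obtain ⟨s, hs, hrs⟩ := exists_mem_Ioo_eq_lineMap c.hit hpr.symm hqr.symm
  have not_delaunay : ¬ DelaunayEdge P p q σ := fun hd => by
    obtain ⟨o, R, -, hpo, hqo, hout⟩ := hd.exists_sqDist hpq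
    have hr := hout r c.crossing.mem_r
    rw [hrs, sqDist_lineMap hpo hqo] at hr
    nlinarith [mul_pos (mul_pos hs.1 (sub_pos.2 hs.2)) (sqDist_pos hpq.symm)]
  refine ⟨c.hit_mem.1.lt_of_ne ?_, c.hit_mem.2.lt_of_ne ?_⟩ <;> rintro rfl
  exacts [not_delaunay c.crossing.del_start, not_delaunay c.crossing.del_end]

lemma exists_violating_disc {t : ℝ} (ht : t ∈ Ioo t₀ t₁) :
    ∃ (o : Plane) (R : ℝ), sqDist (p t) o = R ∧ sqDist (q t) o = R ∧
      (∀ x ∈ P, x ≠ r → R ≤ sqDist (x t) o) ∧ sqDist (r t) o < R := by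
  obtain ⟨o, R, -, hpo, hqo, hout⟩ :=
    (c.crossing.del_erase t (Ioo_subset_Icc_self ht)).exists_sqDist (c.apart hP t).1
  refine ⟨o, R, hpo, hqo, fun x hx hxr => hout x (Finset.mem_erase.2 ⟨hxr, hx⟩), ?_⟩
  by_contra! hr
  refine c.crossing.not_del t ht (delaunayEdge_of_sqDist o R hpo hqo fun x hx => ?_)
  obtain rfl | hxr := eq_or_ne x r
  exacts [hr, hout x (Finset.mem_erase.2 ⟨hxr, hx⟩)]

/-- Off the segment, the line `pq` lies outside every disc through `p` and `q`, so `r` can only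
meet it at the crossing time. -/
lemma orient_ne_zero {u : ℝ} (hu : u ∈ Ioo t₀ t₁) (huσ : u ≠ σ) :
    orient (p u) (q u) (r u) ≠ 0 := by
  intro h
  have hpq := (c.apart hP u).1
  obtain ⟨s, hrs⟩ := exists_eq_lineMap_of_orient_eq_zero hpq h
  have hs := mul_sub_one_pos_of_lineMap_notMem_segment fun hseg =>
    huσ (c.unique_hit u (Ioo_subset_Icc_self hu) (hrs ▸ hseg))
  obtain ⟨o, R, hpo, hqo, hout, hr⟩ := c.exists_violating_disc hP hu
  rw [hrs, sqDist_lineMap hpo hqo] at hr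
  nlinarith [mul_pos hs (sqDist_pos hpq.symm)]

lemma sign_after {u : ℝ} (hu : u ∈ Ioo σ t₁) : ε * orient (p u) (q u) (r u) < 0 := by
  obtain ⟨δ, hδ, -, hafter⟩ := c.sign
  have hσ := c.hit_mem_Ioo hP
  have hcont : Continuous fun t => -(ε * orient (p t) (q t) (r t)) :=
    (continuous_const.mul (continuous_orient (hP.cont p c.crossing.mem_p)
      (hP.cont q c.crossing.mem_q) (hP.cont r c.crossing.mem_r))).neg
  have hw : σ + min δ (t₁ - σ) / 2 ∈ Ioo σ t₁ := by
    constructor <;> linarith [lt_min hδ (sub_pos.2 hσ.2), min_le_right δ (t₁ - σ)]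
  refine neg_pos.1 (isPreconnected_Ioo.pos_of_ne_zero hcont.continuousOn
    (fun t ht => ?_) hw (neg_pos.2 (hafter _ ⟨hw.1, ?_⟩)) u hu)
  · exact neg_ne_zero.2 (mul_ne_zero c.sign_ne_zero
      (c.orient_ne_zero hP ⟨hσ.1.trans ht.1, ht.2⟩ ht.1.ne'))
  · linarith [min_le_left δ (t₁ - σ)]

lemma orient_neg_of_incircle_pos {b : Traj} (hb : b ∈ P) (hbp : b ≠ p) (hbq : b ≠ q)
    (hbr : b ≠ r) {u : ℝ} (hu : u ∈ Ioo σ t₁)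
    (hD : 0 < ε * incircle (p u) (b u) (q u) (r u)) : ε * orient (p u) (b u) (q u) < 0 := by
  have hε := c.sign_ne_zero
  have hH := c.sign_after hP hu
  have hH0 : orient (p u) (q u) (r u) ≠ 0 := fun h => by simp [h] at hH
  obtain ⟨o, R, hpo, hqo, hout, hro⟩ :=
    c.exists_violating_disc hP ⟨(c.hit_mem_Ioo hP).1.trans hu.1, hu.2⟩
  have hC := orient_mul_power_circumcenter (p u) (q u) (r u) (b u) hH0
  rw [incircle_rotate] at hC
  have hbC : sqDist (b u) (circumcenter (p u) (q u) (r u)) ≤ circumradiusSq (p u) (q u) (r u) := by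
    by_contra! hW
    have := mul_neg_of_neg_of_pos hH (sub_pos.2 hW)
    rw [mul_assoc, hC] at this
    linarith
  have apart := hP.never_coincide b hb
  have h := orient_mul_orient_neg_of_sqDist_circumcenter_le (c.apart hP u).1 hpo hqo hro
    (hout b hb hbr) hH0 hbC (apart p c.crossing.mem_p hbp u) (apart q c.crossing.mem_q hbq u)
  rw [orient_swap (p u) (b u) (q u), mul_neg, neg_lt_zero] at h
  by_contra! hK
  nlinarith [mul_nonpos_of_nonpos_of_nonneg hH.le hK, mul_pos (mul_self_pos.2 hε) h]

lemma orient_ne_zero_at_end {b : Traj} (hb : b ∈ P) (hbp : b ≠ p) (hbq : b ≠ q) (hbr : b ≠ r)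
    (hK : ε * orient (p t₁) (b t₁) (q t₁) ≤ 0) (hD : 0 ≤ ε * incircle (p t₁) (b t₁) (q t₁) (r t₁)) :
    orient (p t₁) (q t₁) (r t₁) ≠ 0 := by
  intro h0
  obtain ⟨hpq, -, -⟩ := c.apart hP t₁
  obtain ⟨s, hrs⟩ := exists_eq_lineMap_of_orient_eq_zero hpq h0
  have hs := mul_sub_one_pos_of_lineMap_notMem_segment fun hseg =>
    (c.hit_mem_Ioo hP).2.ne' (c.unique_hit t₁ (right_mem_Icc.2 c.crossing.lt.le) (hrs ▸ hseg))
  rw [hrs, incircle_lineMap] at hD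
  have hK0 : ε * orient (p t₁) (b t₁) (q t₁) = 0 := by
    nlinarith [mul_pos hs (sqDist_pos hpq.symm)]
  obtain ⟨hpq', hpr', hqr'⟩ := c.crossing.distinct
  refine hP.no_four_collin t₁ p c.crossing.mem_p b hb q c.crossing.mem_q r c.crossing.mem_r
    ⟨hbp.symm, hpq', hpr', hbq, hbr, hqr'⟩ (collinear_of_orient_eq_zero hpq ?_ h0)
  rw [orient_swap, (mul_eq_zero.1 hK0).resolve_left c.sign_ne_zero, neg_zero]

lemma exists_empty_circle_at_end {b : Traj} (hb : b ∈ P) (hbp : b ≠ p) (hbq : b ≠ q)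
    (hbr : b ≠ r) (hD : ∀ u ∈ Ioo σ t₁, 0 < ε * incircle (p u) (b u) (q u) (r u)) :
    ∃ (o : Plane) (R : ℝ), 0 < R ∧ sqDist (p t₁) o = R ∧ sqDist (b t₁) o = R ∧
      sqDist (q t₁) o = R ∧ sqDist (r t₁) o = R ∧ ∀ x ∈ P, R ≤ sqDist (x t₁) o := by
  have hp := c.crossing.mem_p; have hq := c.crossing.mem_q; have hr := c.crossing.mem_r
  have hε := c.sign_ne_zero
  have hσ := c.hit_mem_Ioo hP
  have cont := hP.cont
  have hK₁ : ε * orient (p t₁) (b t₁) (q t₁) ≤ 0 :=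
    le_of_forall_Ioo_le (continuous_const.mul (continuous_orient (cont p hp) (cont b hb)
      (cont q hq))) continuous_const hσ.2
      fun u hu => (c.orient_neg_of_incircle_pos hP hb hbp hbq hbr hu (hD u hu)).le
  have hD₁ : 0 ≤ ε * incircle (p t₁) (b t₁) (q t₁) (r t₁) :=
    le_of_forall_Ioo_le continuous_const (continuous_const.mul (continuous_incircle (cont p hp)
      (cont b hb) (cont q hq) (cont r hr))) hσ.2 fun u hu => (hD u hu).le
  have hH₁ : ε * orient (p t₁) (q t₁) (r t₁) ≤ 0 :=
    le_of_forall_Ioo_le (continuous_const.mul (continuous_orient (cont p hp) (cont q hq)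
      (cont r hr))) continuous_const hσ.2 fun u hu => (c.sign_after hP hu).le
  have hH0 := c.orient_ne_zero_at_end hP hb hbp hbq hbr hK₁ hD₁
  have hH := hH₁.lt_of_ne (mul_ne_zero hε hH0)
  have hbC : sqDist (b t₁) (circumcenter (p t₁) (q t₁) (r t₁))
      ≤ circumradiusSq (p t₁) (q t₁) (r t₁) := by
    have hC := orient_mul_power_circumcenter (p t₁) (q t₁) (r t₁) (b t₁) hH0
    rw [incircle_rotate] at hC
    by_contra! hW
    have := mul_neg_of_neg_of_pos hH (sub_pos.2 hW)
    rw [mul_assoc, hC] at this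
    linarith
  have hside : orient (p t₁) (q t₁) (r t₁) * orient (p t₁) (q t₁) (b t₁) ≤ 0 := by
    rw [orient_swap (p t₁) (b t₁) (q t₁)]
    nlinarith [mul_nonneg_of_nonpos_of_nonpos hH.le hK₁, mul_self_pos.2 hε]
  have apart := hP.never_coincide b hb
  obtain ⟨o, R, hR, hpo, hqo, hout⟩ := c.crossing.del_end.exists_sqDist (c.apart hP t₁).1
  obtain ⟨hbo, hro⟩ := sqDist_eq_of_le_circumradiusSq (c.apart hP t₁).1 hpo hqo (hout r hr)
    (hout b hb) hH0 hside hbC (apart p hp hbp t₁) (apart q hq hbq t₁)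
  exact ⟨o, R, hR, hpo, hbo, hqo, hro, hout⟩

lemma false_of_empty_circle {b : Traj} (hb : b ∈ P) (hbp : b ≠ p) (hbq : b ≠ q)
    (hbr : b ≠ r) {τ₀ τ : ℝ} (hτ : τ₀ < τ) (hsub : Ioo τ₀ τ ⊆ Ioo σ t₁)
    (hD : ∀ u ∈ Ioo τ₀ τ, 0 < ε * incircle (p u) (q u) (b u) (r u)) {o : Plane} {R : ℝ}
    (hR : 0 < R) (hpo : sqDist (p τ) o = R) (hqo : sqDist (q τ) o = R)
    (hbo : sqDist (b τ) o = R) (hro : sqDist (r τ) o = R) (hout : ∀ x ∈ P, R ≤ sqDist (x τ) o) :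
    False := by
  obtain ⟨hpq, hpr, hqr⟩ := c.crossing.distinct
  have hg : orient (p τ) (q τ) (r τ) ≠ 0 := fun h =>
    (eq_or_eq_of_orient_eq_zero (c.apart hP τ).1 hpo hqo hro h).elim
      (c.apart hP τ).2.1.symm (c.apart hP τ).2.2.symm
  obtain ⟨t, hfar, ht⟩ := (((eventually_orient_mul_incircle_pos hP c.crossing.mem_p
    c.crossing.mem_q c.crossing.mem_r hb ⟨hpq, hpr, hbp.symm, hqr, hbq.symm, hbr.symm⟩ hR hpo
    hqo hro hbo hout hg).filter_mono nhdsWithin_le_nhds).and (Ioo_mem_nhdsLT hτ)).exists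
  have hG := c.sign_after hP (hsub ht)
  have hG0 : orient (p t) (q t) (r t) ≠ 0 := fun h => by simp [h] at hG
  refine c.crossing.not_del t ⟨(c.hit_mem_Ioo hP).1.trans (hsub ht).1, (hsub ht).2⟩
    (delaunayEdge_of_sqDist _ _ rfl (sqDist_circumcenter_middle _ _ _ hG0) fun x hx => ?_)
  obtain rfl | hxp := eq_or_ne x p
  · exact le_rfl
  obtain rfl | hxq := eq_or_ne x q
  · exact (sqDist_circumcenter_middle _ _ _ hG0).ge
  obtain rfl | hxr := eq_or_ne x r
  · exact (sqDist_circumcenter_right _ _ _ hG0).ge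
  refine ((lt_sqDist_circumcenter_iff hG0).2 ?_).le
  obtain rfl | hxb := eq_or_ne x b
  · rw [incircle_swap]
    nlinarith [mul_pos (neg_pos.2 hG) (hD t ht), mul_self_pos.2 c.sign_ne_zero]
  · exact hfar x hx hxp hxq hxr hxb

end SignedCrossing

section TwoCrossings

variable {P : Finset Traj} {ε : ℝ} {p q a r : Traj} {t₀ t₁ t₂ t₃ σ₁ σ₂ : ℝ}

lemma incircle_pos_of_end_le (hP : Nondegenerate P) (c₁ : SignedCrossing P ε p q r t₀ t₁ σ₁)
    (c₂ : SignedCrossing P ε p a r t₂ t₃ σ₂) (hqa : q ≠ a) (hσ : σ₁ < σ₂) (h31 : t₃ ≤ t₁)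
    {u : ℝ} (hu : u ∈ Ioo σ₂ t₃) : 0 < ε * incircle (p u) (q u) (a u) (r u) := by
  have hq := c₁.crossing.mem_q; have ha := c₂.crossing.mem_q
  have hε := c₁.sign_ne_zero
  have hσ₁ := c₁.hit_mem_Ioo hP
  have hσ₂ := c₂.hit_mem_Ioo hP
  have hD₀ : 0 < ε * incircle (p σ₂) (q σ₂) (a σ₂) (r σ₂) := by
    obtain ⟨hpa, hpr, har⟩ := c₂.apart hP σ₂
    obtain ⟨s, hs, hrs⟩ := exists_mem_Ioo_eq_lineMap c₂.hit hpr.symm har.symm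
    have hG := c₁.sign_after hP ⟨hσ, hσ₂.2.trans_le h31⟩
    rw [hrs, orient_lineMap] at hG
    rw [hrs, incircle_lineMap]
    nlinarith [mul_pos (sub_pos.2 hs.2) (sqDist_pos hpa.symm)]
  have hcont : Continuous fun t => ε * incircle (p t) (q t) (a t) (r t) :=
    continuous_const.mul (continuous_incircle (hP.cont p c₁.crossing.mem_p) (hP.cont q hq)
      (hP.cont a ha) (hP.cont r c₁.crossing.mem_r))
  refine isPreconnected_Ico.pos_of_ne_zero hcont.continuousOn (fun t ht => ?_)
    (left_mem_Ico.2 hσ₂.2) hD₀ u (Ioo_subset_Ico_self hu)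
  rcases ht.1.eq_or_lt with rfl | ht₁
  · exact hD₀.ne'
  have ht₀ : t ∈ Ioo σ₁ t₁ := ⟨hσ.trans ht₁, ht.2.trans_le h31⟩
  obtain ⟨o₁, R₁, hp₁, hq₁, hout₁, hr₁⟩ :=
    c₁.exists_violating_disc hP ⟨hσ₁.1.trans ht₀.1, ht₀.2⟩
  obtain ⟨o₂, R₂, hp₂, ha₂, hout₂, hr₂⟩ := c₂.exists_violating_disc hP ⟨hσ₂.1.trans ht₁, ht.2⟩
  have hG := c₁.sign_after hP ht₀
  have hH := c₂.sign_after hP ⟨ht₁, ht.2⟩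
  refine mul_ne_zero hε (incircle_ne_zero_of_violating_discs (c₁.apart hP t).1
    (c₂.apart hP t).1 (hP.never_coincide q hq a ha hqa t) hp₁ hq₁
    (hout₁ a ha c₂.crossing.distinct.2.2) hr₁ hp₂ ha₂ (hout₂ q hq c₁.crossing.distinct.2.2) hr₂ ?_)
  nlinarith [mul_pos (neg_pos.2 hG) (neg_pos.2 hH), mul_self_pos.2 hε]

lemma end_lt_of_hit_lt (hP : Nondegenerate P) (c₁ : SignedCrossing P ε p q r t₀ t₁ σ₁)
    (c₂ : SignedCrossing P ε p a r t₂ t₃ σ₂) (hqa : q ≠ a) (hσ : σ₁ < σ₂) : t₁ < t₃ := by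
  by_contra! h31
  have hD : ∀ u ∈ Ioo σ₂ t₃, 0 < ε * incircle (p u) (q u) (a u) (r u) :=
    fun u hu => incircle_pos_of_end_le hP c₁ c₂ hqa hσ h31 hu
  obtain ⟨hpq, -, hqr⟩ := c₁.crossing.distinct
  obtain ⟨hpa, -, har⟩ := c₂.crossing.distinct
  obtain ⟨o, R, hR, hpo, hqo, hao, hro, hout⟩ :=
    c₂.exists_empty_circle_at_end hP c₁.crossing.mem_q hpq.symm hqa hqr hD
  exact c₁.false_of_empty_circle hP c₂.crossing.mem_q hpa.symm hqa.symm har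
    (c₂.hit_mem_Ioo hP).2 (fun u hu => ⟨hσ.trans hu.1, hu.2.trans_le h31⟩) hD hR hpo hqo hao hro
    hout

lemma start_lt_of_hit_lt (hP : Nondegenerate P) (c₁ : SignedCrossing P ε p q r t₀ t₁ σ₁)
    (c₂ : SignedCrossing P ε p a r t₂ t₃ σ₂) (hqa : q ≠ a) (hσ : σ₁ < σ₂) : t₀ < t₂ :=
  neg_lt_neg_iff.1 <| end_lt_of_hit_lt hP.image_reverse c₂.reverse c₁.reverse
    (reverse_inj.not.2 hqa.symm) (neg_lt_neg hσ)

end TwoCrossings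

namespace SingleCrossing

variable {P : Finset Traj} {p q r : Traj} {t₀ t₁ σ : ℝ}

lemma signedCrossing (h : SingleCrossing P p q r t₀ t₁) (hσ : σ ∈ Icc t₀ t₁)
    (hr : r σ ∈ segment ℝ (p σ) (q σ)) : SignedCrossing P 1 p q r t₀ t₁ σ where
  crossing := h.crossing
  hit_mem := hσ
  hit := hr
  unique_hit t ht hrt := h.unique_hit t ht σ hσ hrt hr
  sign := by
    obtain ⟨-, δ, hδ, hbefore, hafter⟩ := h.dir σ hσ hr
    exact ⟨δ, hδ, fun u hu => by simpa [leftOf] using hbefore u hu,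
      fun u hu => by simpa [rightOf] using hafter u hu⟩

lemma signedCrossing_symm (h : SingleCrossing P p q r t₀ t₁) (hσ : σ ∈ Icc t₀ t₁)
    (hr : r σ ∈ segment ℝ (p σ) (q σ)) : SignedCrossing P (-1) q p r t₀ t₁ σ where
  crossing := h.crossing.symm
  hit_mem := hσ
  hit := segment_symm ℝ (p σ) (q σ) ▸ hr
  unique_hit t ht hrt := h.unique_hit t ht σ hσ (segment_symm ℝ (q t) (p t) ▸ hrt) hr
  sign := by
    obtain ⟨-, δ, hδ, hbefore, hafter⟩ := h.dir σ hσ hr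
    refine ⟨δ, hδ, fun u hu => ?_, fun u hu => ?_⟩ <;> rw [orient_flip, neg_one_mul, neg_neg]
    exacts [hbefore u hu, hafter u hu]

end SingleCrossing

theorem statement6_general (P : Finset Traj)
    (hP : GenPos P) :
    (∀ (p q a r : Traj) (t₀ t₁ t₂ t₃ : ℝ), q ≠ a →
      SingleCrossing P p q r t₀ t₁ → SingleCrossing P p a r t₂ t₃ →
      (∀ tq ∈ Set.Icc t₀ t₁, ∀ ta ∈ Set.Icc t₂ t₃,
        r tq ∈ segment ℝ (p tq) (q tq) → r ta ∈ segment ℝ (p ta) (a ta) → tq < ta) →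
      t₀ < t₂ ∧ t₁ < t₃) ∧
    (∀ (p p' q r : Traj) (t₀ t₁ t₂ t₃ : ℝ), p ≠ p' →
      SingleCrossing P p q r t₀ t₁ → SingleCrossing P p' q r t₂ t₃ →
      (∀ tq ∈ Set.Icc t₀ t₁, ∀ ta ∈ Set.Icc t₂ t₃,
        r tq ∈ segment ℝ (p tq) (q tq) → r ta ∈ segment ℝ (p' ta) (q ta) → tq < ta) →
      t₀ < t₂ ∧ t₁ < t₃) := by
  have hP' := hP.nondegenerate
  constructor
  · intro p q a r t₀ t₁ t₂ t₃ hqa h₁ h₂ horder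
    obtain ⟨σ₁, hσ₁, hr₁⟩ := h₁.crossing.hits
    obtain ⟨σ₂, hσ₂, hr₂⟩ := h₂.crossing.hits
    have c₁ := h₁.signedCrossing hσ₁ hr₁
    have c₂ := h₂.signedCrossing hσ₂ hr₂
    have hσ := horder σ₁ hσ₁ σ₂ hσ₂ hr₁ hr₂
    exact ⟨start_lt_of_hit_lt hP' c₁ c₂ hqa hσ, end_lt_of_hit_lt hP' c₁ c₂ hqa hσ⟩
  · intro p p' q r t₀ t₁ t₂ t₃ hpp' h₁ h₂ horder
    obtain ⟨σ₁, hσ₁, hr₁⟩ := h₁.crossing.hits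
    obtain ⟨σ₂, hσ₂, hr₂⟩ := h₂.crossing.hits
    have c₁ := h₁.signedCrossing_symm hσ₁ hr₁
    have c₂ := h₂.signedCrossing_symm hσ₂ hr₂
    have hσ := horder σ₁ hσ₁ σ₂ hσ₂ hr₁ hr₂
    exact ⟨start_lt_of_hit_lt hP' c₁ c₂ hpp' hσ, end_lt_of_hit_lt hP' c₁ c₂ hpp' hσ⟩

/-- (Lemma 4.6 of the paper.) If `(pq, r, I)` and `(pa, r, J)` are
clockwise `(p,r)`-crossings and `r` hits `pq` before it hits `pa`, then `I` begins
before `J` begins and `I` ends before `J` ends; and the analogous statement for pairs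
of counterclockwise crossings of edges sharing their second endpoint. -/
theorem statement6 (s c : ℕ) (P : Finset Traj)
    (hP : GenPos P) (hs : CocircBound P s) (hc : CollinBound P c) :
    (∀ (p q a r : Traj) (t₀ t₁ t₂ t₃ : ℝ), q ≠ a →
      SingleCrossing P p q r t₀ t₁ → SingleCrossing P p a r t₂ t₃ →
      (∀ tq ∈ Set.Icc t₀ t₁, ∀ ta ∈ Set.Icc t₂ t₃,
        r tq ∈ segment ℝ (p tq) (q tq) → r ta ∈ segment ℝ (p ta) (a ta) → tq < ta) →
      t₀ < t₂ ∧ t₁ < t₃) ∧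
    (∀ (p p' q r : Traj) (t₀ t₁ t₂ t₃ : ℝ), p ≠ p' →
      SingleCrossing P p q r t₀ t₁ → SingleCrossing P p' q r t₂ t₃ →
      (∀ tq ∈ Set.Icc t₀ t₁, ∀ ta ∈ Set.Icc t₂ t₃,
        r tq ∈ segment ℝ (p tq) (q tq) → r ta ∈ segment ℝ (p' ta) (q ta) → tq < ta) →
      t₀ < t₂ ∧ t₁ < t₃) :=
  statement6_general P hP
end
end

section
/- Let p, q, a, b be four points in the Euclidean plane ℝ² with p ≠ q, such that a and b lie strictly on opposite sides of the line through p and q, and b lies in the open circumdisc of p, q, a. Then every closed disc whose boundary circle passes through both p and q contains a or b in its interior; in other words, the edge pq is not Delaunay in the four-point set {p, q, a, b}. -/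
/-!
Kinetic Delaunay triangulations of points moving in the plane:
common definitions (trajectories, Delaunay edges, co-circularity and
collinearity events, general position assumptions, Delaunay crossings).
-/

noncomputable section

attribute [local instance] Classical.propDecidable

/-!
For two circles through `p` and `q`, the difference of the powers of a point with respect to
them is an affine function `D` vanishing at `p` and `q`, hence a multiple of `orient p q`.
Compare an arbitrary circle `C` through `p`, `q` with the circumcircle `T` of `p`, `q`, `a`: then
`D a = pow_C a` and `D b > pow_C b`, because `b` lies inside `T`. As `a` and `b` are strictly on
opposite sides of the line `pq`, `D a` and `D b` cannot be `≥ 0` and `> 0` respectively, so `a` or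
`b` lies inside `C`.
-/

open EuclideanGeometry

lemma dist_sq_eq_coords (x y : Plane) : dist x y ^ 2 = (x 0 - y 0) ^ 2 + (x 1 - y 1) ^ 2 := by
  rw [EuclideanSpace.dist_eq, Real.sq_sqrt (by positivity)]
  simp [Fin.sum_univ_two, Real.dist_eq, sq_abs]

lemma EuclideanGeometry.Sphere.power_eq_coords (s : Sphere Plane) (x : Plane) :
    s.power x = (x 0 - s.center 0) ^ 2 + (x 1 - s.center 1) ^ 2 - s.radius ^ 2 := by
  rw [Sphere.power, dist_sq_eq_coords]

lemma EuclideanGeometry.Sphere.power_eq_zero_of_mem {P : Type*} [MetricSpace P]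
    {s : Sphere P} {x : P} (h : x ∈ s) : s.power x = 0 := by
  rw [Sphere.power, mem_sphere.1 h, sub_self]

lemma power_sub_power_mul_orient_comm {s t : Sphere Plane} {p q : Plane}
    (hps : p ∈ s) (hqs : q ∈ s) (hpt : p ∈ t) (hqt : q ∈ t) (x y : Plane) :
    (s.power x - t.power x) * orient p q y = (s.power y - t.power y) * orient p q x := by
  have hp := congr_arg₂ (· - ·) (Sphere.power_eq_zero_of_mem hps)
    (Sphere.power_eq_zero_of_mem hpt)
  have hq := congr_arg₂ (· - ·) (Sphere.power_eq_zero_of_mem hqs)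
    (Sphere.power_eq_zero_of_mem hqt)
  simp only [Sphere.power_eq_coords, orient] at hp hq ⊢
  linear_combination
    ((q 0 - p 0) * (y 1 - p 1) - (q 1 - p 1) * (y 0 - p 0)
      - ((q 0 - p 0) * (x 1 - p 1) - (q 1 - p 1) * (x 0 - p 0))
      - ((x 0 - p 0) * (y 1 - p 1) - (x 1 - p 1) * (y 0 - p 0))) * hp
    + ((x 0 - p 0) * (y 1 - p 1) - (x 1 - p 1) * (y 0 - p 0)) * hq

lemma power_neg_or_power_neg_of_oppositeSides {s t : Sphere Plane} {p q a b : Plane}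
    (hps : p ∈ s) (hqs : q ∈ s) (hpt : p ∈ t) (hqt : q ∈ t) (hat : a ∈ t)
    (hbt : t.power b < 0) (hopp : OppositeSides p q a b) :
    s.power a < 0 ∨ s.power b < 0 := by
  by_contra! ⟨hsa, hsb⟩
  have key := power_sub_power_mul_orient_comm hps hqs hpt hqt a b
  rw [Sphere.power_eq_zero_of_mem hat, sub_zero] at key
  have ha : orient p q a ≠ 0 := fun h ↦ by simp [OppositeSides, h] at hopp
  have hle : (s.power b - t.power b) * orient p q a ^ 2 ≤ 0 :=
    calc _ = s.power a * (orient p q a * orient p q b) := by linear_combination -orient p q a * key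
      _ ≤ 0 := mul_nonpos_of_nonneg_of_nonpos hsa hopp.le
  have hpos : 0 < (s.power b - t.power b) * orient p q a ^ 2 :=
    mul_pos (by linarith) (by positivity)
  exact hle.not_gt hpos

lemma dist_lt_or_dist_lt_of_oppositeSides_of_inCircumdisc {p q a b o : Plane} {ρ : ℝ}
    (hopp : OppositeSides p q a b) (hin : InCircumdisc p q a b)
    (hp : dist p o = ρ) (hq : dist q o = ρ) : dist a o < ρ ∨ dist b o < ρ := by
  obtain ⟨e, ρ₀, hpe, hqe, hae, hbe⟩ := hin
  set s : Sphere Plane := ⟨o, ρ⟩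
  set t : Sphere Plane := ⟨e, ρ₀⟩
  have hps : p ∈ s := mem_sphere.2 hp
  have hqs : q ∈ s := mem_sphere.2 hq
  have hpt : p ∈ t := mem_sphere.2 hpe
  have hqt : q ∈ t := mem_sphere.2 hqe
  have hat : a ∈ t := mem_sphere.2 hae
  have hs : 0 ≤ s.radius := Sphere.radius_nonneg_of_mem hps
  have ht : 0 ≤ t.radius := Sphere.radius_nonneg_of_mem hpt
  have hbt : t.power b < 0 := (t.power_neg_iff_dist_center_lt_radius ht).2 hbe
  have := power_neg_or_power_neg_of_oppositeSides hps hqs hpt hqt hat hbt hopp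
  rwa [s.power_neg_iff_dist_center_lt_radius hs, s.power_neg_iff_dist_center_lt_radius hs] at this

theorem statement14_general (p q a b : Plane)
    (hopp : OppositeSides p q a b)
    (hin : InCircumdisc p q a b) :
    (∀ (o : Plane) (ρ : ℝ), dist p o = ρ → dist q o = ρ →
      dist a o < ρ ∨ dist b o < ρ) ∧
    ¬ ∃ (o : Plane) (ρ : ℝ), dist p o = ρ ∧ dist q o = ρ ∧
        ∀ x ∈ ({p, q, a, b} : Set Plane), ¬ dist x o < ρ := by
  have hdisc (o : Plane) (ρ : ℝ) (hp : dist p o = ρ) (hq : dist q o = ρ) :=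
    dist_lt_or_dist_lt_of_oppositeSides_of_inCircumdisc hopp hin hp hq
  refine ⟨hdisc, fun ⟨o, ρ, hp, hq, hempty⟩ ↦ ?_⟩
  rcases hdisc o ρ hp hq with ha | hb
  · exact hempty a (by simp) ha
  · exact hempty b (by simp) hb

/-- For `p ≠ q`, points `a`, `b` strictly on opposite sides of the
line through `p` and `q` with `b` in the open circumdisc of `p,q,a`: every closed
disc whose boundary circle passes through `p` and `q` contains `a` or `b` in its
interior; in other words, the edge `pq` is not Delaunay in the set `{p,q,a,b}`. -/
theorem statement14 (p q a b : Plane) (hpq : p ≠ q)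
    (hopp : OppositeSides p q a b)
    (hin : InCircumdisc p q a b) :
    (∀ (o : Plane) (ρ : ℝ), dist p o = ρ → dist q o = ρ →
      dist a o < ρ ∨ dist b o < ρ) ∧
    ¬ ∃ (o : Plane) (ρ : ℝ), dist p o = ρ ∧ dist q o = ρ ∧
        ∀ x ∈ ({p, q, a, b} : Set Plane), ¬ dist x o < ρ :=
  statement14_general p q a b hopp hin
end
end
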